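/- arXiv:2504.05405 — 2 statements merged into one kernel-verified Lean document; each statement's English description precedes it below -/
import Mathlib

section
/- One-step error recursion for PSDP under pushforward concentrability: Let M be a finite-horizon layered MDP with horizon H and Π a policy class containing an optimal policy π⋆, and suppose μ satisfies pushforward concentrability with parameter C_push. Fix h < H, a partial policy π̂_{h+1:H} on layers h+1, …, H, and π̂_h ∈ Π_h satisfying the ε_stat-approximate policy optimization condition (CB_h) with rollout π̂_{h+1:H}. Then E_{x∼μ_h}[V⋆(x) − V^{π̂_{h:H}}(x)] ≤ 2·C_push·E_{x'∼μ_{h+1}}[V⋆(x') − V^{π̂_{h+1:H}}(x')] + ε_stat, where π̂_{h:H} is the partial policy following π̂_h on X_h and π̂_{h+1:H} thereafter. -/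
open Finset

/-- A finite-horizon layered MDP: a finite state space partitioned into layers
`1, …, H`, a finite action set, layer-respecting transitions, mean rewards in `[0,1]`,
and an initial distribution supported on layer `1`. -/
structure LayeredMDP (X A : Type) [Fintype X] [Fintype A] (H : ℕ) where
  layer : X → ℕ
  layer_lb : ∀ x, 1 ≤ layer x
  layer_ub : ∀ x, layer x ≤ H
  layer_surj : ∀ h, 1 ≤ h → h ≤ H → ∃ x, layer x = h
  P : X → A → X → ℝ
  P_nonneg : ∀ x a x', 0 ≤ P x a x'
  P_sum_one : ∀ x a, layer x < H → ∑ x', P x a x' = 1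
  P_supp : ∀ x a x', layer x < H → P x a x' ≠ 0 → layer x' = layer x + 1
  R : X → A → ℝ
  R_nonneg : ∀ x a, 0 ≤ R x a
  R_le_one : ∀ x a, R x a ≤ 1
  d1 : X → ℝ
  d1_nonneg : ∀ x, 0 ≤ d1 x
  d1_sum_one : ∑ x, d1 x = 1
  d1_supp : ∀ x, d1 x ≠ 0 → layer x = 1

namespace LayeredMDP

variable {X A : Type} [Fintype X] [Fintype A] {H : ℕ}

/-- `n`-step value function of policy `π` (backward recursion). -/
noncomputable def Vsteps (M : LayeredMDP X A H) (π : X → A) : ℕ → X → ℝ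
  | 0, _ => 0
  | n + 1, x => M.R x (π x) + ∑ x', M.P x (π x) x' * Vsteps M π n x'

/-- The value `V^π(x)` of policy `π` from state `x` (at layer `M.layer x`). -/
noncomputable def V (M : LayeredMDP X A H) (π : X → A) (x : X) : ℝ :=
  Vsteps M π (H + 1 - M.layer x) x

/-- `Q^π(x,a)`: for `x` in layer `H` this is `R(x,a)`, and for earlier layers it is
`R(x,a) + E_{x' ∼ P(·|x,a)} V^π(x')`.  Note that `Q^π(x,a)` depends on `π` only
through its actions at layers after `M.layer x`, so it also serves as the
`Q`-function of a partial policy on layers `M.layer x + 1, …, H`. -/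
noncomputable def Q (M : LayeredMDP X A H) (π : X → A) (x : X) (a : A) : ℝ :=
  M.R x a + ∑ x', M.P x a x' * Vsteps M π (H - M.layer x) x'

/-- The value `V^π = E_{x ∼ d1} V^π(x)` of a policy. -/
noncomputable def value (M : LayeredMDP X A H) (π : X → A) : ℝ :=
  ∑ x, M.d1 x * M.V π x

noncomputable def occAux (M : LayeredMDP X A H) (π : X → A) : ℕ → X → ℝ
  | 0 => M.d1
  | n + 1 => fun x' => ∑ x, occAux M π n x * M.P x (π x) x'

/-- Occupancy measure `d^π_h` at layer `h ∈ {1, …, H}`. -/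
noncomputable def occ (M : LayeredMDP X A H) (π : X → A) (h : ℕ) : X → ℝ :=
  occAux M π (h - 1)

/-- `πs` is an optimal policy: it maximizes the value from every state simultaneously. -/
def IsOptimal (M : LayeredMDP X A H) (πs : X → A) : Prop :=
  ∀ (x : X) (π : X → A), M.V π x ≤ M.V πs x

/-- `μ = (μ_1, …, μ_H)` is a family of reset distributions: each `μ_h` is a
probability distribution supported on layer `h`. -/
def IsReset (M : LayeredMDP X A H) (μ : ℕ → X → ℝ) : Prop :=
  (∀ h x, 0 ≤ μ h x) ∧ (∀ h, 1 ≤ h → h ≤ H → ∑ x, μ h x = 1) ∧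
    (∀ h x, 1 ≤ h → h ≤ H → μ h x ≠ 0 → M.layer x = h)

/-- `σ` belongs to `Π_h`, the set of restrictions of members of `Π` to layer `h`. -/
def memLayer (M : LayeredMDP X A H) (Pi : Finset (X → A)) (h : ℕ) (σ : X → A) : Prop :=
  ∃ π ∈ Pi, ∀ x, M.layer x = h → σ x = π x

/-- `π` belongs to `Π̄`, the layerwise product closure of `Π`. -/
def inClosure (M : LayeredMDP X A H) (Pi : Finset (X → A)) (π : X → A) : Prop :=
  ∀ h, 1 ≤ h → h ≤ H → M.memLayer Pi h π

/-- Average policy completeness error of the rollout `ρ` (standing for a partial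
policy `π̂_{h+1:H}`) with respect to a distribution `ν` on layer `h`:
`ε_PC(ρ, ν) = min_{π ∈ Π} E_{x∼ν}[max_a Q^ρ(x,a) − Q^ρ(x, π(x))]`. -/
noncomputable def epsPC [Nonempty A] (M : LayeredMDP X A H) (Pi : Finset (X → A))
    (hPi : Pi.Nonempty) (ν : X → ℝ) (ρ : X → A) : ℝ :=
  Pi.inf' hPi fun π =>
    ∑ x, ν x * ((univ.sup' univ_nonempty fun a => M.Q ρ x a) - M.Q ρ x (π x))

/-- The `ε_stat`-approximate policy optimization condition `(CB_h)`: the selection `σ`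
is an `ε_stat`-approximate maximizer of `π ↦ E_{x∼ν}[Q^ρ(x, π(x))]` over `Π`,
where `ρ` is the rollout (partial policy `π̂_{h+1:H}`). -/
def CB (M : LayeredMDP X A H) (Pi : Finset (X → A)) (ν : X → ℝ) (εstat : ℝ)
    (ρ σ : X → A) : Prop :=
  ∀ π ∈ Pi, (∑ x, ν x * M.Q ρ x (π x)) - εstat ≤ ∑ x, ν x * M.Q ρ x (σ x)

/-- `ν` is admissible at layer `h`: it is a mixture of occupancy measures `d^π_h`
of policies `π ∈ Π̄`. -/
def Admissible [DecidableEq X] (M : LayeredMDP X A H) (Pi : Finset (X → A)) (h : ℕ)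
    (ν : X → ℝ) : Prop :=
  ∃ w : (X → A) → ℝ, (∀ π, 0 ≤ w π) ∧ (∑ π, w π = 1) ∧
    (∀ π, w π ≠ 0 → M.inClosure Pi π) ∧ (∀ x, ν x = ∑ π, w π * M.occ π h x)

end LayeredMDP

namespace LayeredMDP

variable {X A : Type} [Fintype X] [Fintype A] {H : ℕ}

lemma Vsteps_congr (M : LayeredMDP X A H) (π ρ : X → A) :
    ∀ (n : ℕ) (x : X), M.layer x + n ≤ H + 1 →
      (∀ y, M.layer x ≤ M.layer y → π y = ρ y) →
      M.Vsteps π n x = M.Vsteps ρ n x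
  | 0, _, _, _ => rfl
  | n+1, x, hn, hag => by
    simp only [Vsteps]
    rw [hag x le_rfl]
    congr 1
    refine Finset.sum_congr rfl fun x' _ => ?_
    cases n with
    | zero => rfl
    | succ m =>
      by_cases hP : M.P x (ρ x) x' = 0
      · rw [hP, zero_mul, zero_mul]
      · have hlt : M.layer x < H := by omega
        have hl' : M.layer x' = M.layer x + 1 := M.P_supp x (ρ x) x' hlt hP
        rw [Vsteps_congr M π ρ (m+1) x' (by omega) (fun y hy => hag y (by omega))]

lemma V_eq_Q (M : LayeredMDP X A H) (π : X → A) (x : X) :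
    M.V π x = M.Q π x (π x) := by
  have hub := M.layer_ub x
  have hn : H + 1 - M.layer x = (H - M.layer x) + 1 := by omega
  rw [V, hn, Vsteps, Q]

end LayeredMDP

open LayeredMDP in
/-- One-step error recursion for PSDP under pushforward
concentrability: if `σ ∈ Π_h` satisfies `(CB_h)` with rollout `ρ = π̂_{h+1:H}`, then
`E_{x∼μ_h}[V⋆(x) − V^{π̂_{h:H}}(x)] ≤ 2·C_push·E_{x'∼μ_{h+1}}[V⋆(x') − V^{π̂_{h+1:H}}(x')] + ε_stat`,
where `π̂_{h:H}` follows `σ` on layer `h` and `ρ` thereafter. -/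
theorem psdp_one_step_recursion
    {X A : Type} [Fintype X] [Fintype A] [Nonempty A]
    {H : ℕ} (M : LayeredMDP X A H)
    (Pi : Finset (X → A)) (hPi : Pi.Nonempty)
    (μ : ℕ → X → ℝ) (hμ : M.IsReset μ)
    (πs : X → A) (hopt : M.IsOptimal πs) (hreal : πs ∈ Pi)
    (Cpush : ℝ)
    (hpush : ∀ h, 2 ≤ h → h ≤ H → ∀ x a x', M.layer x = h - 1 → M.layer x' = h →
      M.P x a x' ≤ Cpush * μ h x')
    (εstat : ℝ)
    (h : ℕ) (h1 : 1 ≤ h) (hH : h < H)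
    (ρ : X → A) (σ : X → A) (hσ : M.memLayer Pi h σ)
    (hCB : M.CB Pi (μ h) εstat ρ σ) :
    ∑ x, μ h x *
        (M.V πs x - M.V (fun y => if M.layer y = h then σ y else ρ y) x) ≤
      2 * Cpush * (∑ x, μ (h + 1) x * (M.V πs x - M.V ρ x)) + εstat := by
  obtain ⟨hμ0, hμ1, hμsupp⟩ := hμ
  set f : X → A := fun y => if M.layer y = h then σ y else ρ y with hf
  have hsum1 : ∑ x, μ h x = 1 := hμ1 h h1 hH.le
  -- Cpush is nonnegative
  have hC : 0 ≤ Cpush := by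
    by_contra hc
    push_neg at hc
    obtain ⟨x0, hx0⟩ := M.layer_surj h h1 hH.le
    have a0 : A := Classical.arbitrary A
    have hsum := M.P_sum_one x0 a0 (by omega)
    have hz : ∀ x', M.P x0 a0 x' = 0 := by
      intro x'
      by_contra hP
      have hl := M.P_supp x0 a0 x' (by omega) hP
      have hle := hpush (h+1) (by omega) (by omega) x0 a0 x' (by omega) (by omega)
      have hnp : Cpush * μ (h+1) x' ≤ 0 :=
        mul_nonpos_of_nonpos_of_nonneg hc.le (hμ0 (h+1) x')
      exact hP (le_antisymm (hle.trans hnp) (M.P_nonneg x0 a0 x'))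
    rw [Finset.sum_eq_zero (fun x' _ => hz x')] at hsum
    norm_num at hsum
  -- value of the spliced policy at layer h
  have key1 : ∀ x, μ h x ≠ 0 → M.V f x = M.Q ρ x (σ x) := by
    intro x hμx
    have hlx : M.layer x = h := hμsupp h x h1 hH.le hμx
    have hfx : f x = σ x := by simp [hf, hlx]
    rw [V_eq_Q, hfx]
    simp only [Q]
    congr 1
    refine Finset.sum_congr rfl fun x' _ => ?_
    by_cases hP : M.P x (σ x) x' = 0
    · rw [hP, zero_mul, zero_mul]
    · have hl' : M.layer x' = M.layer x + 1 := M.P_supp x (σ x) x' (by omega) hP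
      congr 1
      refine Vsteps_congr M f ρ (H - M.layer x) x' (by omega) (fun y hy => ?_)
      simp only [hf]
      rw [if_neg (by omega)]
  -- one-step expansion of the suboptimality of πs vs the rollout Q
  have key2 : ∀ x, μ h x ≠ 0 →
      M.V πs x - M.Q ρ x (πs x) =
        ∑ x', M.P x (πs x) x' * (M.V πs x' - M.V ρ x') := by
    intro x hμx
    have hlx : M.layer x = h := hμsupp h x h1 hH.le hμx
    rw [V_eq_Q]
    simp only [Q]
    have e : ∀ r S1 S2 : ℝ, (r + S1) - (r + S2) = S1 - S2 := fun _ _ _ => by ring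
    rw [e, ← Finset.sum_sub_distrib]
    refine Finset.sum_congr rfl fun x' _ => ?_
    by_cases hP : M.P x (πs x) x' = 0
    · rw [hP]; ring
    · have hl' : M.layer x' = M.layer x + 1 := M.P_supp x (πs x) x' (by omega) hP
      have hn : H + 1 - M.layer x' = H - M.layer x := by
        have := M.layer_ub x; omega
      simp only [V, hn]
      ring
  have hΔ : 0 ≤ ∑ x, μ (h + 1) x * (M.V πs x - M.V ρ x) :=
    Finset.sum_nonneg fun x _ =>
      mul_nonneg (hμ0 _ _) (sub_nonneg.2 (hopt x ρ))
  have T1 : ∑ x, μ h x * (M.V πs x - M.Q ρ x (πs x)) ≤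
      Cpush * ∑ x', μ (h + 1) x' * (M.V πs x' - M.V ρ x') := by
    have hrw : Cpush * (∑ x', μ (h + 1) x' * (M.V πs x' - M.V ρ x')) =
        ∑ x, μ h x * (Cpush * ∑ x', μ (h + 1) x' * (M.V πs x' - M.V ρ x')) := by
      rw [← Finset.sum_mul, hsum1, one_mul]
    rw [hrw]
    refine Finset.sum_le_sum fun x _ => ?_
    by_cases hμx : μ h x = 0
    · rw [hμx, zero_mul, zero_mul]
    · have hlx : M.layer x = h := hμsupp h x h1 hH.le hμx
      rw [key2 x hμx]
      refine mul_le_mul_of_nonneg_left ?_ (hμ0 h x)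
      rw [Finset.mul_sum]
      refine Finset.sum_le_sum fun x' _ => ?_
      have hδ : 0 ≤ M.V πs x' - M.V ρ x' := sub_nonneg.2 (hopt x' ρ)
      by_cases hP : M.P x (πs x) x' = 0
      · rw [hP, zero_mul]
        exact mul_nonneg hC (mul_nonneg (hμ0 _ _) hδ)
      · have hl' : M.layer x' = M.layer x + 1 := M.P_supp x (πs x) x' (by omega) hP
        have hle := hpush (h+1) (by omega) (by omega) x (πs x) x' (by omega) (by omega)
        nlinarith [hμ0 (h+1) x']
  have T2 : ∑ x, μ h x * (M.Q ρ x (πs x) - M.Q ρ x (σ x)) ≤ εstat := by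
    have := hCB πs hreal
    simp only [mul_sub]
    rw [Finset.sum_sub_distrib]
    linarith
  have split : ∑ x, μ h x * (M.V πs x - M.V f x) =
      (∑ x, μ h x * (M.V πs x - M.Q ρ x (πs x))) +
        ∑ x, μ h x * (M.Q ρ x (πs x) - M.Q ρ x (σ x)) := by
    rw [← Finset.sum_add_distrib]
    refine Finset.sum_congr rfl fun x _ => ?_
    by_cases hμx : μ h x = 0
    · rw [hμx]; ring
    · rw [key1 x hμx]; ring
  rw [split]
  nlinarith [mul_nonneg hC hΔ]
end

section
/- Transfer of optimization error to admissible distributions: Let M be a finite-horizon layered MDP with horizon H, Π a policy class, and μ reset distributions satisfying concentrability with parameter C_conc with respect to Π̄. Fix a layer h, a partial policy π̂ := π̂_{h+1:H} on layers h+1, …, H, and π̂_h ∈ Π_h satisfying the ε_stat-approximate policy optimization condition (CB_h) with rollout π̂. Then for every admissible distribution ν on X_h: max_{π∈Π_h} E_{x∼ν}[Q^{π̂}(x, π(x)) − Q^{π̂}(x, π̂_h(x))] ≤ C_conc·(ε_stat + ε_PC(π̂)). -/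
open Finset

namespace LayeredMDP

variable {X A : Type} [Fintype X] [Fintype A] {H : ℕ}

lemma occAux_nonneg (M : LayeredMDP X A H) (π : X → A) : ∀ n x, 0 ≤ M.occAux π n x
  | 0, x => M.d1_nonneg x
  | n+1, x => Finset.sum_nonneg fun y _ =>
      mul_nonneg (occAux_nonneg M π n y) (M.P_nonneg y (π y) x)

lemma occAux_supp (M : LayeredMDP X A H) (π : X → A) :
    ∀ n, n + 1 ≤ H → ∀ x, M.occAux π n x ≠ 0 → M.layer x = n + 1
  | 0, _, x, hx => M.d1_supp x hx
  | n+1, hn, x', hx' => by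
      simp only [occAux] at hx'
      obtain ⟨x, -, hx⟩ := Finset.exists_ne_zero_of_sum_ne_zero hx'
      have h1 : M.occAux π n x ≠ 0 := fun h => hx (by simp [h])
      have h2 : M.P x (π x) x' ≠ 0 := fun h => hx (by simp [h])
      have hl := occAux_supp M π n (by omega) x h1
      have := M.P_supp x (π x) x' (by omega) h2
      omega

lemma occAux_sum (M : LayeredMDP X A H) (π : X → A) :
    ∀ n, n + 1 ≤ H → ∑ x, M.occAux π n x = 1
  | 0, _ => M.d1_sum_one
  | n+1, hn => by
      simp only [occAux]
      rw [Finset.sum_comm]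
      have hc : ∀ x ∈ univ, ∑ x', M.occAux π n x * M.P x (π x) x' = M.occAux π n x := by
        intro x _
        rw [← Finset.mul_sum]
        by_cases h : M.occAux π n x = 0
        · simp [h]
        · rw [M.P_sum_one x (π x)
            (by have := occAux_supp M π n (by omega) x h; omega), mul_one]
      rw [Finset.sum_congr rfl hc]
      exact occAux_sum M π n (by omega)

end LayeredMDP

open LayeredMDP in
/-- Transfer of optimization error to admissible distributions: if `σ`
satisfies `(CB_h)` with rollout `ρ = π̂_{h+1:H}` over the reset distribution `μ_h`, then
for every admissible distribution `ν` on layer `h` and every `π ∈ Π`,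
`E_{x∼ν}[Q^{π̂}(x,π(x)) − Q^{π̂}(x,σ(x))] ≤ C_conc·(ε_stat + ε_PC(π̂))`. -/
theorem transfer_to_admissible
    {X A : Type} [Fintype X] [Fintype A] [DecidableEq X] [Nonempty A]
    {H : ℕ} (M : LayeredMDP X A H)
    (Pi : Finset (X → A)) (hPi : Pi.Nonempty)
    (μ : ℕ → X → ℝ) (hμ : M.IsReset μ)
    (Cconc : ℝ)
    (hconc : ∀ π, M.inClosure Pi π → ∀ h, 1 ≤ h → h ≤ H → ∀ x, M.layer x = h →
      M.occ π h x ≤ Cconc * μ h x)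
    (εstat : ℝ)
    (h : ℕ) (h1 : 1 ≤ h) (hH : h ≤ H)
    (ρ σ : X → A) (hσ : M.memLayer Pi h σ)
    (hCB : M.CB Pi (μ h) εstat ρ σ)
    (ν : X → ℝ) (hν : M.Admissible Pi h ν) :
    ∀ π ∈ Pi, ∑ x, ν x * (M.Q ρ x (π x) - M.Q ρ x (σ x)) ≤
      Cconc * (εstat + M.epsPC Pi hPi (μ h) ρ) := by
  intro π hπ
  obtain ⟨w, hw0, hw1, hwc, hwv⟩ := hν
  obtain ⟨hμ0, hμ1, hμs⟩ := hμ
  have hconc' : ∀ π', M.inClosure Pi π' → ∀ x, M.occ π' h x ≤ Cconc * μ h x := by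
    intro π' hπ' x
    by_cases hx : M.layer x = h
    · exact hconc π' hπ' h h1 hH x hx
    · have ho : M.occ π' h x = 0 := by
        by_contra ho
        exact hx (by have := M.occAux_supp π' (h-1) (by omega) x ho; omega)
      have hμx : μ h x = 0 := by
        by_contra hm
        exact hx (hμs h x h1 hH hm)
      rw [ho, hμx, mul_zero]
  have hCge : (1:ℝ) ≤ Cconc := by
    obtain ⟨π0, hπ0⟩ := hPi
    have hcl : M.inClosure Pi π0 := fun h' _ _ => ⟨π0, hπ0, fun _ _ => rfl⟩
    calc (1:ℝ) = ∑ x, M.occ π0 h x := (M.occAux_sum π0 (h-1) (by omega)).symm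
      _ ≤ ∑ x, Cconc * μ h x := Finset.sum_le_sum fun x _ => hconc' π0 hcl x
      _ = Cconc := by rw [← Finset.mul_sum, hμ1 h h1 hH, mul_one]
  have hν0 : ∀ x, 0 ≤ ν x := fun x => by
    rw [hwv x]
    exact Finset.sum_nonneg fun π' _ =>
      mul_nonneg (hw0 π') (M.occAux_nonneg π' (h-1) x)
  have hνle : ∀ x, ν x ≤ Cconc * μ h x := by
    intro x
    rw [hwv x]
    calc ∑ π', w π' * M.occ π' h x ≤ ∑ π', w π' * (Cconc * μ h x) := by
          apply Finset.sum_le_sum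
          intro π' _
          by_cases hwπ : w π' = 0
          · simp [hwπ]
          · exact mul_le_mul_of_nonneg_left (hconc' π' (hwc π' hwπ) x) (hw0 π')
      _ = Cconc * μ h x := by rw [← Finset.sum_mul, hw1, one_mul]
  set g : X → ℝ := fun x => (univ.sup' univ_nonempty fun a => M.Q ρ x a) - M.Q ρ x (σ x)
    with hg
  have hg0 : ∀ x, 0 ≤ g x := fun x =>
    sub_nonneg.2 (Finset.le_sup' (fun a => M.Q ρ x a) (Finset.mem_univ (σ x)))
  obtain ⟨π', hπ'Pi, hπ'eq⟩ := Finset.exists_mem_eq_inf' hPi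
    (fun π => ∑ x, μ h x * ((univ.sup' univ_nonempty fun a => M.Q ρ x a) - M.Q ρ x (π x)))
  have hstat : (∑ x, μ h x * M.Q ρ x (π' x)) - (∑ x, μ h x * M.Q ρ x (σ x)) ≤ εstat := by
    have := hCB π' hπ'Pi
    linarith
  have hμg : ∑ x, μ h x * g x ≤ εstat + M.epsPC Pi hPi (μ h) ρ := by
    have hPCval : M.epsPC Pi hPi (μ h) ρ
        = ∑ x, μ h x * ((univ.sup' univ_nonempty fun a => M.Q ρ x a) - M.Q ρ x (π' x)) := by
      rw [epsPC, hπ'eq]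
    have hsplit : ∑ x, μ h x * g x
        = (∑ x, μ h x * ((univ.sup' univ_nonempty fun a => M.Q ρ x a) - M.Q ρ x (π' x)))
          + ((∑ x, μ h x * M.Q ρ x (π' x)) - ∑ x, μ h x * M.Q ρ x (σ x)) := by
      simp only [hg, mul_sub, Finset.sum_sub_distrib]
      ring
    rw [hsplit, hPCval]
    linarith
  calc ∑ x, ν x * (M.Q ρ x (π x) - M.Q ρ x (σ x))
      ≤ ∑ x, ν x * g x := Finset.sum_le_sum fun x _ =>
        mul_le_mul_of_nonneg_left
          (sub_le_sub_right (Finset.le_sup' (fun a => M.Q ρ x a) (Finset.mem_univ (π x))) _)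
          (hν0 x)
    _ ≤ ∑ x, (Cconc * μ h x) * g x := Finset.sum_le_sum fun x _ =>
        mul_le_mul_of_nonneg_right (hνle x) (hg0 x)
    _ = Cconc * ∑ x, μ h x * g x := by
        rw [Finset.mul_sum]; exact Finset.sum_congr rfl fun x _ => by ring
    _ ≤ Cconc * (εstat + M.epsPC Pi hPi (μ h) ρ) :=
        mul_le_mul_of_nonneg_left hμg (by linarith)
end
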